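/- arXiv:2301.09604 — 2 statements merged into one kernel-verified Lean document; each statement's English description precedes it below -/
import Mathlib

section
/- Let w, w*, w_1, …, w_M ∈ ℝ^d satisfy the approximate projection condition (1/M) Σ_{i=1}^M ‖w_i − w*‖² ≤ ‖w − w*‖². Define Δ_i = w − w_i and Δ̄ = (1/M) Σ_{i=1}^M Δ_i, and assume Δ̄ ≠ 0. Let η_opt = ⟨w − w*, Δ̄⟩ / ‖Δ̄‖² and let η_F = max{1, Σ_{i=1}^M ‖Δ_i‖² / (2M ‖Δ̄‖²)} be the FedExP step size (with ε = 0). Then |η_opt − η_F| ≤ |η_opt − 1|, and consequently ‖w − η_F Δ̄ − w*‖² ≤ ‖w − Δ̄ − w*‖². -/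
/-!
Expanding `‖(w - w*) - Δᵢ‖²` turns the projection condition into
`∑ ‖Δᵢ‖² ≤ 2M ⟪w - w*, Δ̄⟫`, i.e. the FedExP extrapolation ratio never exceeds `η_opt`.
Hence replacing `1` by `max 1 ratio` can only move the step towards `η_opt`, and since
`η ↦ ‖w - η Δ̄ - w*‖²` is a parabola with vertex `η_opt`, moving towards the vertex
decreases the distance to `w*`.
-/

open scoped RealInnerProductSpace

section InnerProductSpace

variable {E ι : Type*} [NormedAddCommGroup E] [InnerProductSpace ℝ E] [Fintype ι]

theorem sum_norm_sub_sq (v : E) (Δ : ι → E) :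
    ∑ i, ‖v - Δ i‖ ^ 2 = Fintype.card ι * ‖v‖ ^ 2 - 2 * ⟪v, ∑ i, Δ i⟫ + ∑ i, ‖Δ i‖ ^ 2 := by
  simp only [norm_sub_sq_real, Finset.sum_add_distrib, Finset.sum_sub_distrib, inner_sum,
    Finset.mul_sum, Finset.sum_const, Finset.card_univ, nsmul_eq_mul]

theorem sum_norm_sq_le_two_inner_sum {v : E} {Δ : ι → E}
    (h : ∑ i, ‖v - Δ i‖ ^ 2 ≤ Fintype.card ι * ‖v‖ ^ 2) :
    ∑ i, ‖Δ i‖ ^ 2 ≤ 2 * ⟪v, ∑ i, Δ i⟫ := by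
  rw [sum_norm_sub_sq] at h
  linarith

/-- Completing the square in `η`; for `u = 0` both sides reduce to `‖v‖ ^ 2`. -/
theorem norm_sub_smul_sq_eq (v u : E) (η : ℝ) :
    ‖v - η • u‖ ^ 2 =
      ‖v‖ ^ 2 - ⟪v, u⟫ ^ 2 / ‖u‖ ^ 2 + ‖u‖ ^ 2 * (η - ⟪v, u⟫ / ‖u‖ ^ 2) ^ 2 := by
  rcases eq_or_ne u 0 with rfl | hu
  · simp
  have hu2 : ‖u‖ ^ 2 ≠ 0 := by positivity
  rw [norm_sub_sq_real, real_inner_smul_right, norm_smul, Real.norm_eq_abs, mul_pow, sq_abs]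
  field_simp
  ring

theorem norm_sub_smul_sq_le_of_abs_le {v u : E} {η η' : ℝ}
    (h : |⟪v, u⟫ / ‖u‖ ^ 2 - η| ≤ |⟪v, u⟫ / ‖u‖ ^ 2 - η'|) :
    ‖v - η • u‖ ^ 2 ≤ ‖v - η' • u‖ ^ 2 := by
  rw [norm_sub_smul_sq_eq, norm_sub_smul_sq_eq]
  have : (η - ⟪v, u⟫ / ‖u‖ ^ 2) ^ 2 ≤ (η' - ⟪v, u⟫ / ‖u‖ ^ 2) ^ 2 := by
    rw [sq_le_sq, abs_sub_comm, abs_sub_comm η']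
    exact h
  gcongr

end InnerProductSpace

theorem abs_sub_max_le_abs_sub {a b s : ℝ} (h : s ≤ a) : |a - max b s| ≤ |a - b| := by
  rcases le_total s b with hsb | hbs
  · rw [max_eq_left hsb]
  · rw [max_eq_right hbs, abs_of_nonneg (sub_nonneg.2 h), abs_of_nonneg (by linarith)]
    linarith

theorem fedexp_step_closer_than_fedavg_general {d M : ℕ} (hM : 0 < M)
    (w wstar : EuclideanSpace ℝ (Fin d)) (wi : Fin M → EuclideanSpace ℝ (Fin d))
    (hproj : (1 / (M : ℝ)) * ∑ i, ‖wi i - wstar‖ ^ 2 ≤ ‖w - wstar‖ ^ 2)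
    (Δ : Fin M → EuclideanSpace ℝ (Fin d)) (hΔ : ∀ i, Δ i = w - wi i)
    (Δbar : EuclideanSpace ℝ (Fin d)) (hΔbar : Δbar = (1 / (M : ℝ)) • ∑ i, Δ i)
    (ηopt ηF : ℝ) (hηopt : ηopt = ⟪w - wstar, Δbar⟫ / ‖Δbar‖ ^ 2)
    (hηF : ηF = max 1 ((∑ i, ‖Δ i‖ ^ 2) / (2 * (M : ℝ) * ‖Δbar‖ ^ 2))) :
    |ηopt - ηF| ≤ |ηopt - 1| ∧
    ‖w - ηF • Δbar - wstar‖ ^ 2 ≤ ‖w - Δbar - wstar‖ ^ 2 := by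
  have hsum : ∑ i, ‖Δ i‖ ^ 2 ≤ 2 * ⟪w - wstar, ∑ i, Δ i⟫ := by
    apply sum_norm_sq_le_two_inner_sum
    have hdiff : ∀ i, w - wstar - Δ i = wi i - wstar := fun i => by rw [hΔ]; abel
    rw [one_div, inv_mul_le_iff₀ (by exact_mod_cast hM)] at hproj
    simpa only [hdiff, Fintype.card_fin] using hproj
  have hstep : (∑ i, ‖Δ i‖ ^ 2) / (2 * (M : ℝ) * ‖Δbar‖ ^ 2) ≤ ηopt := by
    have hinner : ⟪w - wstar, Δbar⟫ = ⟪w - wstar, ∑ i, Δ i⟫ / M := by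
      rw [hΔbar, real_inner_smul_right, one_div_mul_eq_div]
    rw [hηopt, hinner, ← div_div, ← div_div]
    gcongr
    linarith
  have hclose : |ηopt - ηF| ≤ |ηopt - 1| := by
    rw [hηF]
    exact abs_sub_max_le_abs_sub hstep
  refine ⟨hclose, ?_⟩
  rw [sub_right_comm w _ wstar, sub_right_comm w Δbar wstar]
  nth_rewrite 2 [← one_smul ℝ Δbar]
  rw [hηopt] at hclose
  exact norm_sub_smul_sq_le_of_abs_le hclose

/-- The FedExP step size (with `ε = 0`) is at least as close to the optimal server step size as
the FedAvg step size `1`, and hence the FedExP update is at least as close to the optimum as the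
FedAvg update. -/
theorem fedexp_step_closer_than_fedavg {d M : ℕ} (hM : 0 < M)
    (w wstar : EuclideanSpace ℝ (Fin d)) (wi : Fin M → EuclideanSpace ℝ (Fin d))
    (hproj : (1 / (M : ℝ)) * ∑ i, ‖wi i - wstar‖ ^ 2 ≤ ‖w - wstar‖ ^ 2)
    (Δ : Fin M → EuclideanSpace ℝ (Fin d)) (hΔ : ∀ i, Δ i = w - wi i)
    (Δbar : EuclideanSpace ℝ (Fin d)) (hΔbar : Δbar = (1 / (M : ℝ)) • ∑ i, Δ i)
    (hΔbarne : Δbar ≠ 0)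
    (ηopt ηF : ℝ) (hηopt : ηopt = ⟪w - wstar, Δbar⟫ / ‖Δbar‖ ^ 2)
    (hηF : ηF = max 1 ((∑ i, ‖Δ i‖ ^ 2) / (2 * (M : ℝ) * ‖Δbar‖ ^ 2))) :
    |ηopt - ηF| ≤ |ηopt - 1| ∧
    ‖w - ηF • Δbar - wstar‖ ^ 2 ≤ ‖w - Δbar - wstar‖ ^ 2 :=
  fedexp_step_closer_than_fedavg_general hM w wstar wi hproj Δ hΔ Δbar hΔbar ηopt ηF hηopt hηF
end

section
/- (Per-round descent inequality of FedExP in the convex case.) Let F_1, …, F_M : ℝ^d → ℝ be convex, differentiable and L-smooth, let F = (1/M)Σ_{i=1}^M F_i, let w* be a minimizer of F, and assume (1/M) Σ_{i=1}^M ‖∇F_i(w*)‖² ≤ σ*². Fix τ ≥ 1 and 0 < η_l ≤ 1/(6τL). Given w^{(t)} ∈ ℝ^d, define local full-batch gradient descent iterates w_i^{(t,0)} = w^{(t)}, w_i^{(t,k+1)} = w_i^{(t,k)} − η_l ∇F_i(w_i^{(t,k)}) for k = 0,…,τ−1, client updates Δ_i^{(t)} = w^{(t)} − w_i^{(t,τ)},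 Δ̄^{(t)} = (1/M)Σ_{i=1}^M Δ_i^{(t)}, and w^{(t+1)} = w^{(t)} − η_g^{(t)} Δ̄^{(t)}, where η_g^{(t)} ≥ 0 satisfies M η_g^{(t)} ‖Δ̄^{(t)}‖² ≤ Σ_{i=1}^M ‖Δ_i^{(t)}‖². Then ‖w^{(t+1)} − w*‖² ≤ ‖w^{(t)} − w*‖² − (η_g^{(t)} η_l τ / 3)(F(w^{(t)}) − F(w*)) + 3 η_g^{(t)} η_l² τ² σ*² + 12 η_g^{(t)} η_l³ τ²(τ−1) L σ*². -/
/-!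
While `ηl * L * τ ≤ 1/6`, the local gradient-descent path of client `i` drifts from `w⁽ᵗ⁾` by at
most `(6/5) ηl k ‖∇Fᵢ(w⁽ᵗ⁾)‖` after `k` steps, so all its gradients stay within a factor `6/5` of
`∇Fᵢ(w⁽ᵗ⁾)`. Convexity at the local iterate together with the descent lemma back to `w⁽ᵗ⁾` bounds
`⟪Δᵢ, w⁽ᵗ⁾ - w*⟫` from below by `ηl τ (Fᵢ(w⁽ᵗ⁾) - Fᵢ(w*))` minus a drift term, and `‖Δᵢ‖²` from
above by `(36/25) ηl² τ² ‖∇Fᵢ(w⁽ᵗ⁾)‖²`. The condition on `ηg` lets the server step trade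
`ηg² ‖Δ̄‖²` for `(ηg/M) Σᵢ ‖Δᵢ‖²`, and cocoercivity together with `Σᵢ ∇Fᵢ(w*) = 0` bounds the mean
of `‖∇Fᵢ(w⁽ᵗ⁾)‖²` by `4L (F(w⁽ᵗ⁾) - F(w*)) + 2σ*²`.
-/

open InnerProductSpace Finset
open scoped Gradient

section

variable {E : Type*} [NormedAddCommGroup E] [InnerProductSpace ℝ E] {ι : Type*} [Fintype ι]

theorem norm_sub_smul_sq_le_of_mul_norm_sq_le (v Δ : E) {ηg m Q : ℝ} (hm : 0 < m)
    (hηg : 0 ≤ ηg) (hext : m * ηg * ‖Δ‖ ^ 2 ≤ Q) :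
    ‖v - ηg • Δ‖ ^ 2 ≤ ‖v‖ ^ 2 - 2 * ηg * ⟪v, Δ⟫_ℝ + ηg / m * Q := by
  have hquad : ηg ^ 2 * ‖Δ‖ ^ 2 ≤ ηg / m * Q :=
    calc ηg ^ 2 * ‖Δ‖ ^ 2 = ηg / m * (m * ηg * ‖Δ‖ ^ 2) := by field_simp
      _ ≤ ηg / m * Q := by gcongr
  rw [norm_sub_sq_real, real_inner_smul_right, norm_smul, mul_pow, Real.norm_of_nonneg hηg]
  linarith

theorem norm_sub_smul_average_sq_le (v : E) (Δ : ι → E) (x y : ι → ℝ) {ηg m α β κ : ℝ}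
    (hm : 0 < m) (hηg : 0 ≤ ηg)
    (hext : m * ηg * ‖(1 / m) • ∑ i, Δ i‖ ^ 2 ≤ ∑ i, ‖Δ i‖ ^ 2)
    (hinner : ∀ i, α * x i - β * y i ≤ ⟪Δ i, v⟫_ℝ) (hnorm : ∀ i, ‖Δ i‖ ^ 2 ≤ κ * y i) :
    ‖v - ηg • ((1 / m) • ∑ i, Δ i)‖ ^ 2 ≤
      ‖v‖ ^ 2 - 2 * ηg * (α * (1 / m * ∑ i, x i) - β * (1 / m * ∑ i, y i))
        + ηg * (κ * (1 / m * ∑ i, y i)) := by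
  have hstep := norm_sub_smul_sq_le_of_mul_norm_sq_le v _ hm hηg hext
  have havg_inner : α * (1 / m * ∑ i, x i) - β * (1 / m * ∑ i, y i) ≤
      ⟪v, (1 / m) • ∑ i, Δ i⟫_ℝ := by
    rw [real_inner_smul_right, inner_sum, mul_left_comm, mul_left_comm β, ← mul_sub,
      mul_sum, mul_sum, ← sum_sub_distrib]
    gcongr with i
    rw [real_inner_comm]
    exact hinner i
  have havg_norm : ηg / m * ∑ i, ‖Δ i‖ ^ 2 ≤ ηg * (κ * (1 / m * ∑ i, y i)) := by
    rw [mul_left_comm κ, mul_sum _ _ κ, div_eq_mul_one_div, mul_assoc]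
    gcongr with i
    exact hnorm i
  linarith [mul_le_mul_of_nonneg_left havg_inner (by positivity : (0 : ℝ) ≤ 2 * ηg)]

variable [CompleteSpace E] {f : E → ℝ} {L : ℝ}

def GradientLipschitz (f : E → ℝ) (L : ℝ) : Prop :=
  ∀ w w' : E, ‖∇ f w - ∇ f w'‖ ≤ L * ‖w - w'‖

theorem GradientLipschitz.norm_gradient_le (hf : GradientLipschitz f L) (x y : E) :
    ‖∇ f x‖ ≤ L * ‖x - y‖ + ‖∇ f y‖ :=
  (norm_le_norm_sub_add _ _).trans (add_le_add_left (hf x y) _)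

theorem DifferentiableAt.hasDerivAt_comp_add_smul {x v : E} {t : ℝ}
    (hf : DifferentiableAt ℝ f (x + t • v)) :
    HasDerivAt (fun s : ℝ => f (x + s • v)) ⟪∇ f (x + t • v), v⟫_ℝ t := by
  have hline : HasDerivAt (fun s : ℝ => x + s • v) v t := by
    simpa using ((hasDerivAt_id t).smul_const v).const_add x
  simpa [Function.comp_def] using
    (hasGradientAt_iff_hasFDerivAt.mp hf.hasGradientAt).comp_hasDerivAt t hline

theorem ConvexOn.add_inner_gradient_le (hc : ConvexOn ℝ Set.univ f) {x : E}
    (hd : DifferentiableAt ℝ f x) (y : E) : f x + ⟪∇ f x, y - x⟫_ℝ ≤ f y := by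
  have hline : ConvexOn ℝ Set.univ (fun t : ℝ => f (x + t • (y - x))) := by
    simpa [Function.comp_def, AffineMap.lineMap_apply_module', add_comm] using
      hc.comp_affineMap (AffineMap.lineMap x y : ℝ →ᵃ[ℝ] E)
  have hder := (DifferentiableAt.hasDerivAt_comp_add_smul (t := 0) (v := y - x)
    (by simpa using hd)).hasDerivWithinAt (s := Set.Ioi 0)
  have := hline.le_slope_of_hasDerivWithinAt_Ioi (Set.mem_univ 0) (Set.mem_univ 1) one_pos
    (by simpa only [zero_smul, add_zero] using hder)
  simp only [slope_def_field, zero_smul, add_zero, one_smul, add_sub_cancel, sub_zero,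
    div_one] at this
  linarith

theorem GradientLipschitz.le_add_inner_gradient_add_sq (hf : GradientLipschitz f L)
    (hd : Differentiable ℝ f) (x y : E) :
    f y ≤ f x + ⟪∇ f x, y - x⟫_ℝ + L / 2 * ‖y - x‖ ^ 2 := by
  set v := y - x
  let χ : ℝ → ℝ := fun t => f (x + t • v) - t * ⟪∇ f x, v⟫_ℝ - L / 2 * t ^ 2 * ‖v‖ ^ 2
  have hχ : ∀ t, HasDerivAt χ (⟪∇ f (x + t • v), v⟫_ℝ - ⟪∇ f x, v⟫_ℝ - L * t * ‖v‖ ^ 2) t :=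
    fun t => by
      have hsq : HasDerivAt (fun t : ℝ => L / 2 * t ^ 2 * ‖v‖ ^ 2) (L * t * ‖v‖ ^ 2) t :=
        (((hasDerivAt_pow 2 t).const_mul (L / 2)).mul_const _).congr_deriv (by ring)
      exact (((hd (x + t • v)).hasDerivAt_comp_add_smul).sub
        (hasDerivAt_mul_const ⟪∇ f x, v⟫_ℝ)).sub hsq
  have hanti : AntitoneOn χ (Set.Icc 0 1) := by
    refine antitoneOn_of_deriv_nonpos (convex_Icc 0 1)
      (HasDerivAt.continuousOn fun t _ => hχ t)
      (fun t _ => (hχ t).differentiableAt.differentiableWithinAt) fun t ht => ?_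
    rw [interior_Icc] at ht
    rw [(hχ t).deriv, ← inner_sub_left, sub_nonpos]
    calc ⟪∇ f (x + t • v) - ∇ f x, v⟫_ℝ ≤ ‖∇ f (x + t • v) - ∇ f x‖ * ‖v‖ :=
          real_inner_le_norm _ _
      _ ≤ L * ‖x + t • v - x‖ * ‖v‖ := by gcongr; exact hf _ _
      _ = L * t * ‖v‖ ^ 2 := by
          rw [add_sub_cancel_left, norm_smul, Real.norm_of_nonneg ht.1.le]; ring
  have := hanti (by simp) (by simp) zero_le_one
  simp only [χ, zero_smul, add_zero, one_smul, zero_mul, sub_zero, one_mul, one_pow, mul_one,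
    zero_pow two_ne_zero, mul_zero, v, add_sub_cancel] at this
  linarith

theorem GradientLipschitz.apply_sub_smul_gradient_le (hf : GradientLipschitz f L)
    (hd : Differentiable ℝ f) (hL : 0 < L) (x : E) :
    f (x - L⁻¹ • ∇ f x) ≤ f x - ‖∇ f x‖ ^ 2 / (2 * L) := by
  have := hf.le_add_inner_gradient_add_sq hd x (x - L⁻¹ • ∇ f x)
  rw [sub_sub_cancel_left, inner_neg_right, real_inner_smul_right, real_inner_self_eq_norm_sq,
    norm_neg, norm_smul, Real.norm_of_nonneg (inv_nonneg.mpr hL.le)] at this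
  convert this using 1
  field_simp
  ring

theorem ConvexOn.norm_gradient_sub_sq_le (hc : ConvexOn ℝ Set.univ f)
    (hf : GradientLipschitz f L) (hd : Differentiable ℝ f) (hL : 0 < L) (x y : E) :
    ‖∇ f x - ∇ f y‖ ^ 2 ≤ 2 * L * (f x - f y - ⟪∇ f y, x - y⟫_ℝ) := by
  -- `φ` is convex and `L`-smooth with minimiser `y`; one gradient step from `x` then gives
  -- `φ x - φ y ≥ ‖∇φ x‖² / (2L)`.
  set φ : E → ℝ := fun w => f w - ⟪∇ f y, w⟫_ℝ
  have hφgrad : ∀ w, ∇ φ w = ∇ f w - ∇ f y := fun w => by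
    refine HasGradientAt.gradient (hasGradientAt_iff_hasFDerivAt.mpr ?_)
    rw [map_sub, toDual_gradient]
    exact (hd w).hasFDerivAt.sub (toDual ℝ E (∇ f y)).hasFDerivAt
  have hφc : ConvexOn ℝ Set.univ φ := hc.sub ((innerₛₗ ℝ (∇ f y)).concaveOn convex_univ)
  have hφd : Differentiable ℝ φ := hd.sub (toDual ℝ E (∇ f y)).differentiable
  have hφL : GradientLipschitz φ L := fun w w' => by
    simpa only [hφgrad, sub_sub_sub_cancel_right] using hf w w'
  have hmin := hφc.add_inner_gradient_le (hφd y) (x - L⁻¹ • ∇ φ x)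
  have hdesc := hφL.apply_sub_smul_gradient_le hφd hL x
  simp only [hφgrad, sub_self, inner_zero_left, add_zero] at hmin hdesc
  have hφxy : φ x - φ y = f x - f y - ⟪∇ f y, x - y⟫_ℝ := by
    simp only [φ, inner_sub_right]; ring
  have : ‖∇ f x - ∇ f y‖ ^ 2 / (2 * L) ≤ φ x - φ y := by linarith
  rwa [div_le_iff₀ (by positivity), hφxy, mul_comm] at this

theorem ConvexOn.sub_le_inner_gradient_add_sq (hc : ConvexOn ℝ Set.univ f)
    (hf : GradientLipschitz f L) (hd : Differentiable ℝ f) (x y z : E) :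
    f y - f z ≤ ⟪∇ f x, y - z⟫_ℝ + L / 2 * ‖y - x‖ ^ 2 := by
  have hconv := hc.add_inner_gradient_le (hd x) z
  have hdesc := hf.le_add_inner_gradient_add_sq hd x y
  have hsplit : ⟪∇ f x, y - z⟫_ℝ = ⟪∇ f x, y - x⟫_ℝ - ⟪∇ f x, z - x⟫_ℝ := by
    rw [← inner_sub_right, sub_sub_sub_cancel_right]
  linarith

def IsGradientDescentPath (f : E → ℝ) (η : ℝ) (τ : ℕ) (w : ℕ → E) : Prop :=
  ∀ k < τ, w (k + 1) = w k - η • ∇ f (w k)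

namespace IsGradientDescentPath

variable {η : ℝ} {τ : ℕ} {w : ℕ → E}

theorem sub_eq_smul_sum (hw : IsGradientDescentPath f η τ w) {n : ℕ} (hn : n ≤ τ) :
    w 0 - w n = η • ∑ k ∈ range n, ∇ f (w k) := by
  induction n with
  | zero => simp
  | succ n ih =>
    rw [sum_range_succ, smul_add, ← ih (by omega), hw n (by omega)]
    abel

theorem norm_sub_le (hw : IsGradientDescentPath f η τ w) (hf : GradientLipschitz f L)
    (hη : 0 ≤ η) (hL : 0 ≤ L) (hηLτ : η * L * τ ≤ 1 / 6) {k : ℕ} (hk : k ≤ τ) :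
    ‖w k - w 0‖ ≤ 6 / 5 * η * k * ‖∇ f (w 0)‖ := by
  induction k with
  | zero => simp
  | succ k ih =>
    have hηLk : η * L * k ≤ 1 / 6 := by
      refine le_trans ?_ hηLτ
      gcongr
      exact_mod_cast (Nat.le_succ k).trans hk
    have hG := mul_nonneg hη (norm_nonneg (∇ f (w 0)))
    push_cast
    calc ‖w (k + 1) - w 0‖ = ‖(w k - w 0) - η • ∇ f (w k)‖ := by
          rw [hw k (by omega), sub_right_comm]
      _ ≤ ‖w k - w 0‖ + η * ‖∇ f (w k)‖ := by
          refine (_root_.norm_sub_le _ _).trans_eq ?_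
          rw [norm_smul, Real.norm_of_nonneg hη]
      _ ≤ ‖w k - w 0‖ + η * (L * ‖w k - w 0‖ + ‖∇ f (w 0)‖) := by
          gcongr; exact hf.norm_gradient_le _ _
      _ = (1 + η * L) * ‖w k - w 0‖ + η * ‖∇ f (w 0)‖ := by ring
      _ ≤ (1 + η * L) * (6 / 5 * η * k * ‖∇ f (w 0)‖) + η * ‖∇ f (w 0)‖ := by
          gcongr; exact ih (by omega)
      _ ≤ 6 / 5 * η * (k + 1) * ‖∇ f (w 0)‖ := by
          nlinarith [mul_nonneg (sub_nonneg.mpr hηLk) hG]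

theorem norm_gradient_le (hw : IsGradientDescentPath f η τ w) (hf : GradientLipschitz f L)
    (hη : 0 ≤ η) (hL : 0 ≤ L) (hηLτ : η * L * τ ≤ 1 / 6) {k : ℕ} (hk : k ≤ τ) :
    ‖∇ f (w k)‖ ≤ 6 / 5 * ‖∇ f (w 0)‖ := by
  have hηLk : η * L * k ≤ 1 / 6 := le_trans (by gcongr) hηLτ
  calc ‖∇ f (w k)‖ ≤ L * ‖w k - w 0‖ + ‖∇ f (w 0)‖ := hf.norm_gradient_le _ _
    _ ≤ L * (6 / 5 * η * k * ‖∇ f (w 0)‖) + ‖∇ f (w 0)‖ := by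
        gcongr; exact hw.norm_sub_le hf hη hL hηLτ hk
    _ ≤ 6 / 5 * ‖∇ f (w 0)‖ := by nlinarith [norm_nonneg (∇ f (w 0))]

theorem norm_sub_last_le (hw : IsGradientDescentPath f η τ w) (hf : GradientLipschitz f L)
    (hη : 0 ≤ η) (hL : 0 ≤ L) (hηLτ : η * L * τ ≤ 1 / 6) :
    ‖w 0 - w τ‖ ≤ 6 / 5 * η * τ * ‖∇ f (w 0)‖ := by
  calc ‖w 0 - w τ‖ = η * ‖∑ k ∈ range τ, ∇ f (w k)‖ := by
        rw [hw.sub_eq_smul_sum le_rfl, norm_smul, Real.norm_of_nonneg hη]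
    _ ≤ η * ∑ _k ∈ range τ, 6 / 5 * ‖∇ f (w 0)‖ := by
        gcongr
        exact norm_sum_le_of_le _ fun k hk =>
          hw.norm_gradient_le hf hη hL hηLτ (mem_range.mp hk).le
    _ = 6 / 5 * η * τ * ‖∇ f (w 0)‖ := by rw [sum_const, card_range, nsmul_eq_mul]; ring

theorem inner_sub_last_ge (hw : IsGradientDescentPath f η τ w) (hc : ConvexOn ℝ Set.univ f)
    (hf : GradientLipschitz f L) (hd : Differentiable ℝ f) (hη : 0 ≤ η) (hL : 0 ≤ L)
    (hηLτ : η * L * τ ≤ 1 / 6) (z : E) :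
    η * τ * (f (w 0) - f z) - 18 / 25 * L * η ^ 3 * τ * (τ - 1) ^ 2 * ‖∇ f (w 0)‖ ^ 2 ≤
      ⟪w 0 - w τ, w 0 - z⟫_ℝ := by
  set c := 18 / 25 * L * η ^ 2 * (τ - 1) ^ 2 * ‖∇ f (w 0)‖ ^ 2
  have hstep : ∀ k ∈ range τ, f (w 0) - f z - c ≤ ⟪∇ f (w k), w 0 - z⟫_ℝ := fun k hk => by
    have hkτ : (k : ℝ) ≤ τ - 1 := by
      have : (k : ℝ) + 1 ≤ τ := by exact_mod_cast mem_range.mp hk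
      linarith
    have hdrift : ‖w 0 - w k‖ ≤ 6 / 5 * η * (τ - 1) * ‖∇ f (w 0)‖ := by
      rw [norm_sub_rev]
      refine (hw.norm_sub_le hf hη hL hηLτ (mem_range.mp hk).le).trans ?_
      gcongr
    have := hc.sub_le_inner_gradient_add_sq hf hd (w k) (w 0) z
    have hsq : L / 2 * ‖w 0 - w k‖ ^ 2 ≤ c := by
      calc L / 2 * ‖w 0 - w k‖ ^ 2 ≤ L / 2 * (6 / 5 * η * (τ - 1) * ‖∇ f (w 0)‖) ^ 2 := by
            gcongr
        _ = c := by ring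
    linarith
  calc η * τ * (f (w 0) - f z) - 18 / 25 * L * η ^ 3 * τ * (τ - 1) ^ 2 * ‖∇ f (w 0)‖ ^ 2
      = η * ∑ _k ∈ range τ, (f (w 0) - f z - c) := by
        rw [sum_const, card_range, nsmul_eq_mul]; ring
    _ ≤ η * ∑ k ∈ range τ, ⟪∇ f (w k), w 0 - z⟫_ℝ := by gcongr with k hk; exact hstep k hk
    _ = ⟪w 0 - w τ, w 0 - z⟫_ℝ := by
        rw [hw.sub_eq_smul_sum le_rfl, real_inner_smul_left, sum_inner]

end IsGradientDescentPath

theorem sum_gradient_eq_zero_of_forall_sum_le {F : ι → E → ℝ} {z : E}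
    (hd : ∀ i, DifferentiableAt ℝ (F i) z) (hmin : ∀ w, ∑ i, F i z ≤ ∑ i, F i w) :
    ∑ i, ∇ (F i) z = 0 := by
  have hder : HasFDerivAt (fun w => ∑ i, F i w) (toDual ℝ E (∑ i, ∇ (F i) z)) z := by
    rw [map_sum]
    exact HasFDerivAt.fun_sum fun i _ => hasGradientAt_iff_hasFDerivAt.mp (hd i).hasGradientAt
  exact (toDual ℝ E).map_eq_zero_iff.mp
    (IsLocalMin.hasFDerivAt_eq_zero (Filter.Eventually.of_forall hmin) hder)

theorem sum_norm_gradient_sq_le {F : ι → E → ℝ} (hc : ∀ i, ConvexOn ℝ Set.univ (F i))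
    (hf : ∀ i, GradientLipschitz (F i) L) (hd : ∀ i, Differentiable ℝ (F i)) (hL : 0 < L)
    {z : E} (hz : ∑ i, ∇ (F i) z = 0) (x : E) :
    ∑ i, ‖∇ (F i) x‖ ^ 2 ≤ 4 * L * ∑ i, (F i x - F i z) + 2 * ∑ i, ‖∇ (F i) z‖ ^ 2 := by
  have hclient : ∀ i, ‖∇ (F i) x‖ ^ 2 ≤
      4 * L * (F i x - F i z - ⟪∇ (F i) z, x - z⟫_ℝ) + 2 * ‖∇ (F i) z‖ ^ 2 := fun i => by
    have htri := (pow_le_pow_left₀ (norm_nonneg _)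
      (norm_le_norm_sub_add (∇ (F i) x) (∇ (F i) z)) 2).trans add_sq_le
    have := (hc i).norm_gradient_sub_sq_le (hf i) (hd i) hL x z
    linarith
  calc ∑ i, ‖∇ (F i) x‖ ^ 2
      ≤ ∑ i, (4 * L * (F i x - F i z - ⟪∇ (F i) z, x - z⟫_ℝ) + 2 * ‖∇ (F i) z‖ ^ 2) :=
        sum_le_sum fun i _ => hclient i
    _ = 4 * L * ∑ i, (F i x - F i z) + 2 * ∑ i, ‖∇ (F i) z‖ ^ 2 := by
        rw [sum_add_distrib, ← mul_sum, ← mul_sum, sum_sub_distrib, ← sum_inner, hz,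
          inner_zero_left, sub_zero]

end

theorem pos_and_one_le_and_mul_le_of_le_one_div {η L : ℝ} {τ : ℕ} (hη : 0 < η)
    (h : η ≤ 1 / (6 * τ * L)) : 0 < L ∧ 1 ≤ (τ : ℝ) ∧ η * L * τ ≤ 1 / 6 := by
  have hτL : 0 < 6 * τ * L := one_div_pos.mp (hη.trans_le h)
  have hL : 0 < L := pos_of_mul_pos_right hτL (by positivity)
  refine ⟨hL, Nat.one_le_cast.mpr (Nat.cast_pos.mp
    (pos_of_mul_pos_right (pos_of_mul_pos_left hτL hL.le) (by norm_num))), ?_⟩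
  have := (le_div_iff₀ hτL).mp h
  linarith

theorem fedexp_descent_coefficients {ηg ηl L τ h γ σ : ℝ} (hηg : 0 ≤ ηg) (hηl : 0 ≤ ηl)
    (hL : 0 ≤ L) (hτ : 1 ≤ τ) (hηLτ : ηl * L * τ ≤ 1 / 6) (hh : 0 ≤ h)
    (hγ : γ ≤ 4 * L * h + 2 * σ ^ 2) :
    -2 * ηg * (ηl * τ * h - 18 / 25 * L * ηl ^ 3 * τ * (τ - 1) ^ 2 * γ)
        + ηg * (36 / 25 * ηl ^ 2 * τ ^ 2 * γ) ≤
      -(ηg * ηl * τ / 3) * h + 3 * ηg * ηl ^ 2 * τ ^ 2 * σ ^ 2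
        + 12 * ηg * ηl ^ 3 * τ ^ 2 * (τ - 1) * L * σ ^ 2 := by
  set K := 36 / 25 * ηl ^ 2 * τ * (L * ηl * (τ - 1) ^ 2 + τ)
  have hτ1 : 0 ≤ τ - 1 := by linarith
  have hK : 0 ≤ K := by positivity
  have hdrift : (ηl * L * (τ - 1)) ^ 2 ≤ (1 / 6) ^ 2 := by
    gcongr
    nlinarith
  have hhcoef : 4 * L * K ≤ 5 / 3 * ηl * τ := by
    have : 4 * L * K = 144 / 25 * ηl * τ * ((ηl * L * (τ - 1)) ^ 2 + ηl * L * τ) := by ring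
    rw [this]
    have : 0 ≤ ηl * τ := by positivity
    nlinarith
  have hσcoef : 2 * K ≤ 3 * ηl ^ 2 * τ ^ 2 + 12 * ηl ^ 3 * τ ^ 2 * (τ - 1) * L := by
    have hτ3 : τ * (τ - 1) ^ 2 ≤ τ ^ 2 * (τ - 1) := by nlinarith
    have h3 := mul_le_mul_of_nonneg_left hτ3 (by positivity : 0 ≤ ηl ^ 3 * L)
    have : 2 * K = 72 / 25 * ηl ^ 2 * τ ^ 2 + 72 / 25 * (ηl ^ 3 * L * (τ * (τ - 1) ^ 2)) := by
      ring
    have : 0 ≤ ηl ^ 2 * τ ^ 2 := by positivity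
    have : 0 ≤ ηl ^ 3 * L * (τ ^ 2 * (τ - 1)) := by positivity
    nlinarith
  calc -2 * ηg * (ηl * τ * h - 18 / 25 * L * ηl ^ 3 * τ * (τ - 1) ^ 2 * γ)
        + ηg * (36 / 25 * ηl ^ 2 * τ ^ 2 * γ)
      = -2 * ηg * ηl * τ * h + ηg * K * γ := by ring
    _ ≤ -2 * ηg * ηl * τ * h + ηg * K * (4 * L * h + 2 * σ ^ 2) := by gcongr
    _ = -2 * ηg * ηl * τ * h + ηg * h * (4 * L * K) + ηg * σ ^ 2 * (2 * K) := by ring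
    _ ≤ -2 * ηg * ηl * τ * h + ηg * h * (5 / 3 * ηl * τ)
        + ηg * σ ^ 2 * (3 * ηl ^ 2 * τ ^ 2 + 12 * ηl ^ 3 * τ ^ 2 * (τ - 1) * L) := by gcongr
    _ = _ := by ring

theorem fedexp_convex_per_round_descent_general {d M : ℕ} (hM : 0 < M)
    (F : Fin M → EuclideanSpace ℝ (Fin d) → ℝ)
    (Fbar : EuclideanSpace ℝ (Fin d) → ℝ)
    (hFbar : ∀ w, Fbar w = (1 / (M : ℝ)) * ∑ i, F i w)
    (L ηl σstar : ℝ) (τ : ℕ)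
    (hconv : ∀ i, ConvexOn ℝ Set.univ (F i)) (hdiff : ∀ i, Differentiable ℝ (F i))
    (hsmooth : ∀ i, ∀ w w' : EuclideanSpace ℝ (Fin d),
      ‖gradient (F i) w - gradient (F i) w'‖ ≤ L * ‖w - w'‖)
    (wstar : EuclideanSpace ℝ (Fin d)) (hmin : ∀ w, Fbar wstar ≤ Fbar w)
    (hσ : (1 / (M : ℝ)) * ∑ i, ‖gradient (F i) wstar‖ ^ 2 ≤ σstar ^ 2)
    (hηl : 0 < ηl) (hηlL : ηl ≤ 1 / (6 * τ * L))
    (wt : EuclideanSpace ℝ (Fin d))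
    (wloc : Fin M → ℕ → EuclideanSpace ℝ (Fin d))
    (hwloc0 : ∀ i, wloc i 0 = wt)
    (hwlocrec : ∀ i, ∀ k < τ,
      wloc i (k + 1) = wloc i k - ηl • gradient (F i) (wloc i k))
    (Δ : Fin M → EuclideanSpace ℝ (Fin d)) (hΔ : ∀ i, Δ i = wt - wloc i τ)
    (Δbar : EuclideanSpace ℝ (Fin d)) (hΔbar : Δbar = (1 / (M : ℝ)) • ∑ i, Δ i)
    (ηg : ℝ) (hηg0 : 0 ≤ ηg)
    (hηgub : (M : ℝ) * ηg * ‖Δbar‖ ^ 2 ≤ ∑ i, ‖Δ i‖ ^ 2)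
    (wnext : EuclideanSpace ℝ (Fin d)) (hwnext : wnext = wt - ηg • Δbar) :
    ‖wnext - wstar‖ ^ 2 ≤ ‖wt - wstar‖ ^ 2
      - (ηg * ηl * τ / 3) * (Fbar wt - Fbar wstar)
      + 3 * ηg * ηl ^ 2 * τ ^ 2 * σstar ^ 2
      + 12 * ηg * ηl ^ 3 * τ ^ 2 * (τ - 1) * L * σstar ^ 2 := by
  subst hwnext hΔbar
  have hm : (0 : ℝ) < M := Nat.cast_pos.mpr hM
  obtain ⟨hL, hτ, hηLτ⟩ := pos_and_one_le_and_mul_le_of_le_one_div hηl hηlL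
  have hpath : ∀ i, IsGradientDescentPath (F i) ηl τ (wloc i) := hwlocrec
  have hinner : ∀ i, ηl * τ * (F i wt - F i wstar)
      - 18 / 25 * L * ηl ^ 3 * τ * (τ - 1) ^ 2 * ‖∇ (F i) wt‖ ^ 2 ≤ ⟪Δ i, wt - wstar⟫_ℝ :=
    fun i => by
      simpa only [hΔ i, hwloc0 i] using (hpath i).inner_sub_last_ge (hconv i) (hsmooth i)
        (hdiff i) hηl.le hL.le hηLτ wstar
  have hnorm : ∀ i, ‖Δ i‖ ^ 2 ≤ 36 / 25 * ηl ^ 2 * τ ^ 2 * ‖∇ (F i) wt‖ ^ 2 := fun i => by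
    have := (hpath i).norm_sub_last_le (hsmooth i) hηl.le hL.le hηLτ
    rw [hwloc0 i, ← hΔ i] at this
    calc ‖Δ i‖ ^ 2 ≤ (6 / 5 * ηl * τ * ‖∇ (F i) wt‖) ^ 2 := by gcongr
      _ = _ := by ring
  have hround := norm_sub_smul_average_sq_le (wt - wstar) Δ (fun i => F i wt - F i wstar)
    (fun i => ‖∇ (F i) wt‖ ^ 2) hm hηg0 hηgub hinner hnorm
  have hz : ∑ i, ∇ (F i) wstar = 0 :=
    sum_gradient_eq_zero_of_forall_sum_le (fun i => hdiff i wstar) fun w =>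
      le_of_mul_le_mul_left (by simpa only [← hFbar] using hmin w) (one_div_pos.mpr hm)
  have hgap : 1 / (M : ℝ) * ∑ i, (F i wt - F i wstar) = Fbar wt - Fbar wstar := by
    rw [hFbar, hFbar, sum_sub_distrib, mul_sub]
  have hγ : 1 / (M : ℝ) * ∑ i, ‖∇ (F i) wt‖ ^ 2 ≤
      4 * L * (Fbar wt - Fbar wstar) + 2 * σstar ^ 2 := by
    have := mul_le_mul_of_nonneg_left (sum_norm_gradient_sq_le hconv hsmooth hdiff hL hz wt)
      (one_div_nonneg.mpr hm.le)
    rw [← hgap]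
    linarith
  rw [hgap] at hround
  rw [sub_right_comm]
  linarith [fedexp_descent_coefficients hηg0 hηl.le hL.le hτ hηLτ (sub_nonneg.mpr (hmin wt)) hγ]

/-- Per-round descent inequality of FedExP in the convex case. -/
theorem fedexp_convex_per_round_descent {d M : ℕ} (hM : 0 < M)
    (F : Fin M → EuclideanSpace ℝ (Fin d) → ℝ)
    (Fbar : EuclideanSpace ℝ (Fin d) → ℝ)
    (hFbar : ∀ w, Fbar w = (1 / (M : ℝ)) * ∑ i, F i w)
    (L ηl σstar : ℝ) (τ : ℕ) (hτ : 1 ≤ τ)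
    (hconv : ∀ i, ConvexOn ℝ Set.univ (F i)) (hdiff : ∀ i, Differentiable ℝ (F i))
    (hsmooth : ∀ i, ∀ w w' : EuclideanSpace ℝ (Fin d),
      ‖gradient (F i) w - gradient (F i) w'‖ ≤ L * ‖w - w'‖)
    (wstar : EuclideanSpace ℝ (Fin d)) (hmin : ∀ w, Fbar wstar ≤ Fbar w)
    (hσ : (1 / (M : ℝ)) * ∑ i, ‖gradient (F i) wstar‖ ^ 2 ≤ σstar ^ 2)
    (hηl : 0 < ηl) (hηlL : ηl ≤ 1 / (6 * τ * L))
    (wt : EuclideanSpace ℝ (Fin d))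
    (wloc : Fin M → ℕ → EuclideanSpace ℝ (Fin d))
    (hwloc0 : ∀ i, wloc i 0 = wt)
    (hwlocrec : ∀ i, ∀ k < τ,
      wloc i (k + 1) = wloc i k - ηl • gradient (F i) (wloc i k))
    (Δ : Fin M → EuclideanSpace ℝ (Fin d)) (hΔ : ∀ i, Δ i = wt - wloc i τ)
    (Δbar : EuclideanSpace ℝ (Fin d)) (hΔbar : Δbar = (1 / (M : ℝ)) • ∑ i, Δ i)
    (ηg : ℝ) (hηg0 : 0 ≤ ηg)
    (hηgub : (M : ℝ) * ηg * ‖Δbar‖ ^ 2 ≤ ∑ i, ‖Δ i‖ ^ 2)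
    (wnext : EuclideanSpace ℝ (Fin d)) (hwnext : wnext = wt - ηg • Δbar) :
    ‖wnext - wstar‖ ^ 2 ≤ ‖wt - wstar‖ ^ 2
      - (ηg * ηl * τ / 3) * (Fbar wt - Fbar wstar)
      + 3 * ηg * ηl ^ 2 * τ ^ 2 * σstar ^ 2
      + 12 * ηg * ηl ^ 3 * τ ^ 2 * (τ - 1) * L * σstar ^ 2 :=
  fedexp_convex_per_round_descent_general hM F Fbar hFbar L ηl σstar τ hconv hdiff hsmooth wstar
    hmin hσ hηl hηlL wt wloc hwloc0 hwlocrec Δ hΔ Δbar hΔbar ηg hηg0 hηgub wnext hwnext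
end
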